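/- arXiv:1109.4184 — 2 statements merged into one kernel-verified Lean document; each statement's English description precedes it below -/
import Mathlib

section
/- Let k ≥ 1, let P_0 ⊆ ℝ^k be a convex set containing the origin, and let π : ℝ^k → ℝ be a function with π(0) = 0 that is affine on P_0 (there exist g ∈ ℝ^k and δ ∈ ℝ with π(x) = g·x + δ for all x ∈ P_0). Let π' : ℝ^k → ℝ be a bounded function with π'(0) = 0 such that E(π) ⊆ E(π'). Let Π be the parallelotope generated by linearly independent vectors v^1, …, v^n ∈ ℝ^k (so 0 ∈ Π), and suppose Π + Π ⊆ P_0. Then there exists g' ∈ ℝ^k such that π'(r) = g'·r for all r ∈ Π. -/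
open scoped BigOperators

noncomputable section

/-- `ℝ^k` with the Euclidean norm. -/
abbrev Vec (k : ℕ) := EuclideanSpace ℝ (Fin k)

/-- The point of `ℝ^k` with the given integer coordinates. -/
def intVec (k : ℕ) (w : Fin k → ℤ) : Vec k := WithLp.toLp 2 (fun i => (w i : ℝ))

/-- A feasible solution of the infinite group relaxation: a finitely supported
`s : ℝ^k → ℕ` with `f + ∑ r, s r • r ∈ ℤ^k`. -/
def IsFeasible (k : ℕ) (f : Vec k) (s : Vec k →₀ ℕ) : Prop :=
  ∃ w : Fin k → ℤ, f + ∑ r ∈ s.support, (s r : ℝ) • r = intVec k w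

/-- A valid function for the infinite group relaxation. -/
def IsValid (k : ℕ) (f : Vec k) (π : Vec k → ℝ) : Prop :=
  (∀ r, 0 ≤ π r) ∧
  ∀ s : Vec k →₀ ℕ, IsFeasible k f s → 1 ≤ ∑ r ∈ s.support, π r * (s r : ℝ)

/-- A minimal valid function: no valid `π' ≠ π` with `π' ≤ π` pointwise. -/
def IsMinimal (k : ℕ) (f : Vec k) (π : Vec k → ℝ) : Prop :=
  IsValid k f π ∧ ¬ ∃ π' : Vec k → ℝ, IsValid k f π' ∧ π' ≠ π ∧ ∀ r, π' r ≤ π r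

/-- `S(θ)`: the feasible solutions satisfying the inequality of `θ` at equality. -/
def Ssol (k : ℕ) (f : Vec k) (θ : Vec k → ℝ) : Set (Vec k →₀ ℕ) :=
  {s | IsFeasible k f s ∧ ∑ r ∈ s.support, θ r * (s r : ℝ) = 1}

/-- A facet. -/
def IsFacet (k : ℕ) (f : Vec k) (π : Vec k → ℝ) : Prop :=
  IsValid k f π ∧
  ∀ π' : Vec k → ℝ, IsValid k f π' → Ssol k f π ⊆ Ssol k f π' → π' = π

/-- An extreme valid function. -/
def IsExtremeValid (k : ℕ) (f : Vec k) (π : Vec k → ℝ) : Prop :=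
  IsValid k f π ∧ ∀ π₁ π₂ : Vec k → ℝ, IsValid k f π₁ → IsValid k f π₂ →
    (∀ r, π r = (1 / 2) * π₁ r + (1 / 2) * π₂ r) → π₁ = π ∧ π₂ = π

/-- `E(θ)`: the pairs where `θ` is additive. -/
def Eadd (k : ℕ) (θ : Vec k → ℝ) : Set (Vec k × Vec k) :=
  {p | θ (p.1 + p.2) = θ p.1 + θ p.2}

/-- `θ` is genuinely `k`-dimensional: it does not factor through a linear map to `ℝ^(k-1)`. -/
def GenuinelyFullDim (k : ℕ) (θ : Vec k → ℝ) : Prop :=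
  ¬ ∃ (φ : Vec (k - 1) → ℝ) (T : Vec k →ₗ[ℝ] Vec (k - 1)), θ = φ ∘ T

/-- The cone generated by a finite family of vectors. -/
def coneOf {k m : ℕ} (v : Fin m → Vec k) : Set (Vec k) :=
  {x | ∃ lam : Fin m → ℝ, (∀ i, 0 ≤ lam i) ∧ x = ∑ i, lam i • v i}

/-- The cone generated by a set of vectors. -/
def coneOfSet {k : ℕ} (Vs : Set (Vec k)) : Set (Vec k) :=
  {x | ∃ (n : ℕ) (v : Fin n → Vec k) (lam : Fin n → ℝ),
    (∀ i, v i ∈ Vs) ∧ (∀ i, 0 ≤ lam i) ∧ x = ∑ i, lam i • v i}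

/-- A polyhedron: an intersection of finitely many closed halfspaces. -/
def IsPolyhedron {k : ℕ} (P : Set (Vec k)) : Prop :=
  ∃ (n : ℕ) (a : Fin n → Vec k) (b : Fin n → ℝ),
    P = {x | ∀ i, (inner ℝ (a i) x : ℝ) ≤ b i}

/-- A face of a polyhedron cut out by a valid inequality. -/
def IsFace {k : ℕ} (F P : Set (Vec k)) : Prop :=
  ∃ (a : Vec k) (b : ℝ), (∀ x ∈ P, (inner ℝ a x : ℝ) ≤ b) ∧
    F = {x | x ∈ P ∧ (inner ℝ a x : ℝ) = b}

/-- A polyhedral complex in `ℝ^k`. -/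
structure PolyhedralComplex (k : ℕ) where
  cells : Set (Set (Vec k))
  poly : ∀ P ∈ cells, IsPolyhedron P
  faces_mem : ∀ P ∈ cells, ∀ F : Set (Vec k), IsFace F P → F ∈ cells
  inter_face : ∀ P ∈ cells, ∀ Q ∈ cells, IsFace (P ∩ Q) P ∧ IsFace (P ∩ Q) Q

/-- A maximal cell of a polyhedral complex. -/
def IsMaximalCell {k : ℕ} (PC : PolyhedralComplex k) (P : Set (Vec k)) : Prop :=
  P ∈ PC.cells ∧ ∀ Q ∈ PC.cells, P ⊆ Q → Q = P

/-- A pure complex: all maximal cells are full-dimensional. -/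
def PolyhedralComplex.Pure {k : ℕ} (PC : PolyhedralComplex k) : Prop :=
  ∀ P : Set (Vec k), IsMaximalCell PC P → (interior P).Nonempty

/-- A complete complex: the union of the cells is all of `ℝ^k`. -/
def PolyhedralComplex.Complete {k : ℕ} (PC : PolyhedralComplex k) : Prop :=
  ⋃₀ PC.cells = Set.univ

/-- A polyhedral fan: finitely many cells, all of which are cones. -/
def IsFan {k : ℕ} (F : PolyhedralComplex k) : Prop :=
  F.cells.Finite ∧ ∀ C ∈ F.cells, ∀ x ∈ C, ∀ t : ℝ, 0 ≤ t → t • x ∈ C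

/-- A locally finite polyhedral complex: near each point it looks like a translated fan. -/
def PolyhedralComplex.LocFinite {k : ℕ} (PC : PolyhedralComplex k) : Prop :=
  ∀ r : Vec k, ∃ ε : ℝ, 0 < ε ∧ ∃ F : PolyhedralComplex k, IsFan F ∧
    {S : Set (Vec k) | ∃ P ∈ PC.cells, S = P ∩ Metric.ball r ε ∧ S.Nonempty} =
    {S : Set (Vec k) | ∃ C ∈ F.cells,
      S = ((fun x => x + r) '' C) ∩ Metric.ball r ε ∧ S.Nonempty}

/-- `θ` is piecewise linear with cell complex `PC` (pure and complete), the maximal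
cell `P` carrying the gradient `grad P`. -/
def IsPWLWith {k : ℕ} (PC : PolyhedralComplex k) (grad : Set (Vec k) → Vec k)
    (θ : Vec k → ℝ) : Prop :=
  PC.Pure ∧ PC.Complete ∧
  ∀ P : Set (Vec k), IsMaximalCell PC P →
    ∃ δ : ℝ, ∀ x ∈ P, θ x = (inner ℝ (grad P) x : ℝ) + δ

/-- The gradient set of a piecewise linear function. -/
def gradSet {k : ℕ} (PC : PolyhedralComplex k) (grad : Set (Vec k) → Vec k) : Set (Vec k) :=
  {g | ∃ P : Set (Vec k), IsMaximalCell PC P ∧ grad P = g}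

/-!
Since `π 0 = 0`, the affine `π` is linear on `P₀ ⊇ Π + Π`, so every pair of points of `Π` lies in
`E(π) ⊆ E(π')`: `π'` is additive on `Π`. On each edge `t ↦ t • vᵢ`, `t ∈ [0, 1]`, this makes `π'` a
bounded solution of Cauchy's equation on an interval, hence linear: `π' (t • vᵢ) = t π' (vᵢ)`.
Adding up over the edges, `π' (∑ tᵢ vᵢ) = ∑ tᵢ π' (vᵢ)`, and by linear independence these
prescribed values on the `vᵢ` are those of an inner product with some `g'`.
-/

open Set

theorem exists_inner_eq_of_linearIndependent {E ι : Type*} [NormedAddCommGroup E]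
    [InnerProductSpace ℝ E] [Fintype ι] {v : ι → E} (hv : LinearIndependent ℝ v) (c : ι → ℝ) :
    ∃ g : E, ∀ i, inner ℝ g (v i) = c i := by
  let K := Submodule.span ℝ (range v)
  let b : Module.Basis ι ℝ K := .span hv
  have : FiniteDimensional ℝ K := .of_basis b
  let φ : StrongDual ℝ K := LinearMap.toContinuousLinearMap (b.constr ℝ c)
  refine ⟨(InnerProductSpace.toDual ℝ K).symm φ, fun i => ?_⟩
  have key := InnerProductSpace.toDual_symm_apply (x := b i) (y := φ)
  rwa [Submodule.coe_inner, LinearMap.coe_toContinuousLinearMap', Module.Basis.constr_basis,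
    Module.Basis.span_apply] at key

section UnitInterval

variable {f : ℝ → ℝ}

theorem map_natCast_mul_of_add_on_unitInterval
    (hadd : ∀ x y, 0 ≤ x → 0 ≤ y → x + y ≤ 1 → f (x + y) = f x + f y)
    {x : ℝ} (hx : 0 ≤ x) : ∀ m : ℕ, m * x ≤ 1 → f (m * x) = m * f x
  | 0, _ => by simpa using hadd 0 0 le_rfl le_rfl (by norm_num)
  | m + 1, hm => by
    push_cast at hm ⊢
    rw [add_mul, one_mul, hadd _ _ (by positivity) hx (by linarith),
      map_natCast_mul_of_add_on_unitInterval hadd hx m (by linarith)]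
    ring

theorem eq_zero_of_add_on_unitInterval {M : ℝ} (hbdd : ∀ x ∈ Icc (0 : ℝ) 1, |f x| ≤ M)
    (hadd : ∀ x y, 0 ≤ x → 0 ≤ y → x + y ≤ 1 → f (x + y) = f x + f y) (h1 : f 1 = 0)
    {t : ℝ} (ht : t ∈ Icc (0 : ℝ) 1) : f t = 0 := by
  suffices hN : ∀ N : ℕ, 0 < N → N * |f t| ≤ M by
    by_contra hne
    obtain ⟨N, hN'⟩ := exists_nat_gt (M / |f t|)
    rw [div_lt_iff₀ (abs_pos.2 hne)] at hN'
    have := hN (N + 1) N.succ_pos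
    push_cast at this
    nlinarith [abs_nonneg (f t)]
  intro N hN
  have hN' : (0 : ℝ) < N := by exact_mod_cast hN
  have hmul := map_natCast_mul_of_add_on_unitInterval hadd (x := 1 / N) (by positivity)
  have hgrid : f (1 / N) = 0 := by
    have := hmul N (mul_one_div_cancel hN'.ne').le
    rw [mul_one_div_cancel hN'.ne', h1] at this
    exact (mul_eq_zero.1 this.symm).resolve_left hN'.ne'
  -- `t = q + s` with `q = ⌊N t⌋ / N` on the grid `ℕ / N`, where `f` vanishes, and `0 ≤ N s ≤ 1`.
  set m := ⌊N * t⌋₊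
  have hm : (m : ℝ) ≤ N * t := Nat.floor_le (by nlinarith [ht.1])
  have hm' : N * t < m + 1 := Nat.lt_floor_add_one _
  set q := m * (1 / (N : ℝ))
  set s := t - q
  have hNs : N * s = N * t - m := by simp only [s, q]; field_simp
  have hs : 0 ≤ s := by nlinarith
  have hq : 0 ≤ q := by positivity
  have hqt : q ≤ t := by simp only [s] at hs; linarith
  have hft : f t = f s := by
    have := hadd q s hq hs (by simp [s, ht.2])
    rwa [add_sub_cancel, hmul m (by linarith [ht.2]), hgrid, mul_zero, zero_add] at this
  calc (N : ℝ) * |f t| = |f (N * s)| := by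
        rw [hft, map_natCast_mul_of_add_on_unitInterval hadd hs N (by linarith), abs_mul,
          abs_of_pos hN']
    _ ≤ M := hbdd _ ⟨by linarith, by linarith⟩

theorem eq_mul_of_add_on_unitInterval {M : ℝ} (hbdd : ∀ x ∈ Icc (0 : ℝ) 1, |f x| ≤ M)
    (hadd : ∀ x y, 0 ≤ x → 0 ≤ y → x + y ≤ 1 → f (x + y) = f x + f y)
    {t : ℝ} (ht : t ∈ Icc (0 : ℝ) 1) : f t = t * f 1 := by
  have key := eq_zero_of_add_on_unitInterval (f := fun x => f x - x * f 1) (M := M + |f 1|)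
    (fun x hx => ?_) (fun x y hx hy hxy => ?_) (by simp) ht
  · linarith
  · calc |f x - x * f 1| ≤ |f x| + |x * f 1| := abs_sub _ _
      _ ≤ M + |f 1| := by
        rw [abs_mul, abs_of_nonneg hx.1]
        exact add_le_add (hbdd x hx) (mul_le_of_le_one_left (abs_nonneg _) hx.2)
  · simp only [hadd x y hx hy hxy]
    ring

end UnitInterval

section Parallelepiped

variable {E ι : Type*} [AddCommGroup E] [Module ℝ E] [Fintype ι] {v : ι → E}

theorem sum_smul_mem_parallelepiped (s : Finset ι) {t : ι → ℝ} (ht : t ∈ Icc 0 1) :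
    ∑ i ∈ s, t i • v i ∈ parallelepiped v := by
  classical
  refine (mem_parallelepiped_iff _ _).2
    ⟨fun i => if i ∈ s then t i else 0, ⟨fun i => ?_, fun i => ?_⟩, ?_⟩
  · dsimp only
    split_ifs
    exacts [ht.1 i, le_rfl]
  · dsimp only
    split_ifs
    exacts [ht.2 i, zero_le_one]
  · simp only [ite_smul, zero_smul, Finset.sum_ite_mem, Finset.univ_inter]

theorem smul_mem_parallelepiped (i : ι) {x : ℝ} (hx : x ∈ Icc (0 : ℝ) 1) :
    x • v i ∈ parallelepiped v := by
  simpa using sum_smul_mem_parallelepiped {i} (t := fun _ => x) ⟨fun _ => hx.1, fun _ => hx.2⟩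

theorem map_sum_smul_of_add_on_parallelepiped {φ : E → ℝ} {M : ℝ}
    (hbdd : ∀ x ∈ parallelepiped v, |φ x| ≤ M)
    (hadd : ∀ a ∈ parallelepiped v, ∀ b ∈ parallelepiped v, φ (a + b) = φ a + φ b)
    {t : ι → ℝ} (ht : t ∈ Icc 0 1) : φ (∑ i, t i • v i) = ∑ i, t i * φ (v i) := by
  classical
  have hedge (i : ι) : φ (t i • v i) = t i * φ (v i) := by
    simpa using eq_mul_of_add_on_unitInterval (f := fun x => φ (x • v i))
      (fun x hx => hbdd _ (smul_mem_parallelepiped i hx))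
      (fun x y hx hy hxy => by
        simpa only [add_smul] using hadd _ (smul_mem_parallelepiped i ⟨hx, by linarith⟩)
          _ (smul_mem_parallelepiped i ⟨hy, by linarith⟩))
      ⟨ht.1 i, ht.2 i⟩
  have h0 : (0 : E) ∈ parallelepiped v := by
    simpa using sum_smul_mem_parallelepiped ∅ ht
  have hφ0 : φ 0 = 0 := by simpa using hadd 0 h0 0 h0
  suffices ∀ s : Finset ι, φ (∑ i ∈ s, t i • v i) = ∑ i ∈ s, t i * φ (v i) from this .univ
  intro s
  induction s using Finset.induction_on with
  | empty => simpa using hφ0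
  | insert i s hi ih =>
    rw [Finset.sum_insert hi, Finset.sum_insert hi,
      hadd _ (smul_mem_parallelepiped i ⟨ht.1 i, ht.2 i⟩) _ (sum_smul_mem_parallelepiped s ht),
      ih, hedge]

end Parallelepiped

theorem statement15_general (k : ℕ)
    (P₀ : Set (Vec k))
    (π : Vec k → ℝ) (hπ0 : π 0 = 0)
    (g : Vec k) (δ : ℝ) (haff : ∀ x ∈ P₀, π x = (inner ℝ g x : ℝ) + δ)
    (π' : Vec k → ℝ) (hbdd : ∃ M : ℝ, ∀ x, |π' x| ≤ M)
    (hE : Eadd k π ⊆ Eadd k π')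
    (n : ℕ) (v : Fin n → Vec k) (hind : LinearIndependent ℝ v)
    (Par : Set (Vec k))
    (hPar : Par = {x : Vec k | ∃ lam : Fin n → ℝ,
      (∀ i, lam i ∈ Set.Icc (0 : ℝ) 1) ∧ x = ∑ i, lam i • v i})
    (hsum : ∀ a ∈ Par, ∀ b ∈ Par, a + b ∈ P₀) :
    ∃ g' : Vec k, ∀ r ∈ Par, π' r = (inner ℝ g' r : ℝ) := by
  obtain ⟨M, hM⟩ := hbdd
  obtain rfl : Par = parallelepiped v := by
    ext x
    simp only [hPar, mem_parallelepiped_iff, Pi.le_def, Pi.zero_apply, Pi.one_apply, mem_Icc,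
      forall_and, mem_ofPred_eq]
  have h0 : (0 : Vec k) ∈ parallelepiped v := by
    simpa using sum_smul_mem_parallelepiped (v := v) ∅ (t := 0) ⟨le_rfl, zero_le_one⟩
  have hP₀ (a) (ha : a ∈ parallelepiped v) : a ∈ P₀ := by simpa using hsum a ha 0 h0
  have hδ : δ = 0 := by simpa [hπ0, eq_comm] using haff 0 (hP₀ 0 h0)
  have hadd (a) (ha : a ∈ parallelepiped v) (b) (hb : b ∈ parallelepiped v) :
      π' (a + b) = π' a + π' b := by
    have hab : (a, b) ∈ Eadd k π := show π (a + b) = π a + π b by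
      rw [haff _ (hsum a ha b hb), haff _ (hP₀ a ha), haff _ (hP₀ b hb), hδ, inner_add_right]
      ring
    exact hE hab
  obtain ⟨g', hg'⟩ := exists_inner_eq_of_linearIndependent hind (fun i => π' (v i))
  refine ⟨g', fun r hr => ?_⟩
  obtain ⟨t, ht, rfl⟩ := (mem_parallelepiped_iff v r).1 hr
  rw [map_sum_smul_of_add_on_parallelepiped (fun x _ => hM x) hadd ht, inner_sum]
  simp [real_inner_smul_right, hg']

/-- `π'` is linear on parallelotopes at the origin. -/
theorem statement15 (k : ℕ) (hk : 1 ≤ k)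
    (P₀ : Set (Vec k)) (hconv : Convex ℝ P₀) (h0 : (0 : Vec k) ∈ P₀)
    (π : Vec k → ℝ) (hπ0 : π 0 = 0)
    (g : Vec k) (δ : ℝ) (haff : ∀ x ∈ P₀, π x = (inner ℝ g x : ℝ) + δ)
    (π' : Vec k → ℝ) (hbdd : ∃ M : ℝ, ∀ x, |π' x| ≤ M) (hπ'0 : π' 0 = 0)
    (hE : Eadd k π ⊆ Eadd k π')
    (n : ℕ) (v : Fin n → Vec k) (hind : LinearIndependent ℝ v)
    (Par : Set (Vec k))
    (hPar : Par = {x : Vec k | ∃ lam : Fin n → ℝ,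
      (∀ i, lam i ∈ Set.Icc (0 : ℝ) 1) ∧ x = ∑ i, lam i • v i})
    (hsum : ∀ a ∈ Par, ∀ b ∈ Par, a + b ∈ P₀) :
    ∃ g' : Vec k, ∀ r ∈ Par, π' r = (inner ℝ g' r : ℝ) :=
  statement15_general k P₀ π hπ0 g δ haff π' hbdd hE n v hind Par hPar hsum
end
end

section
/- Let k ≥ 1. Let a^1, …, a^{k+1} ∈ ℝ^k satisfy cone(a^1, …, a^{k+1}) = ℝ^k, let r^1, …, r^{k+1} ∈ ℝ^k satisfy cone(r^1, …, r^{k+1}) = ℝ^k, and let μ_{ij} ≥ 0 (1 ≤ i, j ≤ k+1) satisfy ∑_{j=1}^{k+1} μ_{ij} = 1 for every i. Then there is at most one tuple (g^1, …, g^{k+1}) ∈ (ℝ^k)^{k+1} satisfying the linear system: ∑_{j=1}^{k+1} μ_{ij}(a^i · g^j) = 1 for all i ∈ {1, …, k+1}, and r^i · g^j = r^i · g^ℓ for all i, j, ℓ ∈ {1, …, k+1} with j ≠ i and ℓ ≠ i. -/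
open scoped BigOperators

noncomputable section

/-!
In each row `i` the products `⟪r i, g j⟫`, `j ≠ i`, share one value, which `⟪r i, g i⟫` exceeds
by some `e i`. Pairing a positive dependence `∑ c i • r i = 0` with `g j - g l` gives
`c j * e j = c l * e l`; so if one excess vanishes, all do, every `g j - g l` is orthogonal to all
`r p`, and `g` is constant. With `T` the excess in row `0`, the combination `T h • g - T g • h`
of two solutions is therefore constant, and a positive dependence of the `a i`, applied to the
first equations, forces `T g = T h`. Then `g - h` is a constant family orthogonal to every `a i`.
-/

open RealInnerProductSpace

section Cone

variable {k m : ℕ} {v : Fin m → Vec k}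

lemma exists_pos_sum_smul_eq_zero (hv : coneOf v = Set.univ) :
    ∃ c : Fin m → ℝ, (∀ i, 0 < c i) ∧ ∑ i, c i • v i = 0 := by
  obtain ⟨lam, hlam, hsum⟩ : -∑ i, v i ∈ coneOf v := hv ▸ Set.mem_univ _
  refine ⟨fun i => lam i + 1, fun i => by linarith [hlam i], ?_⟩
  simp only [add_smul, one_smul, Finset.sum_add_distrib, ← hsum, neg_add_cancel]

lemma eq_zero_of_forall_inner_eq_zero (hv : coneOf v = Set.univ) {x : Vec k}
    (hx : ∀ i, ⟪v i, x⟫ = 0) : x = 0 := by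
  obtain ⟨lam, -, hsum⟩ : x ∈ coneOf v := hv ▸ Set.mem_univ x
  refine (inner_self_eq_zero (𝕜 := ℝ)).mp ?_
  nth_rw 1 [hsum]
  simp [sum_inner, real_inner_smul_left, hx]

lemma eq_zero_of_forall_inner_eq [NeZero m] (hv : coneOf v = Set.univ) {x : Vec k} {t : ℝ}
    (hx : ∀ i, ⟪v i, x⟫ = t) : t = 0 ∧ x = 0 := by
  obtain ⟨c, hc, hsum⟩ := exists_pos_sum_smul_eq_zero hv
  have hct : (∑ i, c i) * t = 0 := by
    simpa [sum_inner, real_inner_smul_left, hx, Finset.sum_mul] using congrArg (⟪·, x⟫) hsum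
  have ht : t = 0 :=
    (mul_eq_zero.mp hct).resolve_left (Finset.sum_pos (fun i _ => hc i) Finset.univ_nonempty).ne'
  exact ⟨ht, eq_zero_of_forall_inner_eq_zero hv fun i => (hx i).trans ht⟩

end Cone

def offDiagInnerConst {k m : ℕ} (r : Fin m → Vec k) : Submodule ℝ (Fin m → Vec k) where
  carrier := {d | ∀ i j l, j ≠ i → l ≠ i → ⟪r i, d j⟫ = ⟪r i, d l⟫}
  zero_mem' := by simp
  add_mem' := by
    intro d e hd he i j l hj hl
    simp [inner_add_right, hd i j l hj hl, he i j l hj hl]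
  smul_mem' := by
    intro s d hd i j l hj hl
    simp [inner_smul_right, hd i j l hj hl]

section OffDiag

variable {k m : ℕ} {r : Fin m → Vec k} {d : Fin m → Vec k}

lemma mul_inner_sub_eq_of_mem_offDiagInnerConst (hd : d ∈ offDiagInnerConst r)
    {c : Fin m → ℝ} (hc : ∑ p, c p • r p = 0) {j l : Fin m} (hjl : j ≠ l) :
    c j * ⟪r j, d j - d l⟫ = c l * ⟪r l, d l - d j⟫ := by
  have hpair : ∑ p, c p * ⟪r p, d j - d l⟫ = 0 := by
    simpa [sum_inner, real_inner_smul_left] using congrArg (⟪·, d j - d l⟫) hc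
  rw [Fintype.sum_eq_add j l hjl fun p hp => by
    rw [inner_sub_right, hd p j l (Ne.symm hp.1) (Ne.symm hp.2), sub_self, mul_zero]] at hpair
  rw [← neg_sub (d j) (d l), inner_neg_right]
  linarith

lemma eq_of_mem_offDiagInnerConst (hr : coneOf r = Set.univ) (hd : d ∈ offDiagInnerConst r)
    {j₀ l₀ : Fin m} (hjl₀ : j₀ ≠ l₀) (h₀ : ⟪r j₀, d j₀ - d l₀⟫ = 0) (j l : Fin m) :
    d j = d l := by
  obtain ⟨c, hc, hsum⟩ := exists_pos_sum_smul_eq_zero hr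
  have hexcess : ∀ p l, ⟪r p, d p - d l⟫ = 0 := by
    have hrow : ∀ p l l', l ≠ p → l' ≠ p → ⟪r p, d p - d l⟫ = ⟪r p, d p - d l'⟫ :=
      fun p l l' hl hl' => by rw [inner_sub_right, inner_sub_right, hd p l l' hl hl']
    have hrow₀ : ∀ l, l ≠ j₀ → ⟪r j₀, d j₀ - d l⟫ = 0 :=
      fun l hl => (hrow j₀ l l₀ hl hjl₀.symm).trans h₀
    intro p l
    rcases eq_or_ne l p with rfl | hlp
    · simp
    rcases eq_or_ne p j₀ with rfl | hpj
    · exact hrow₀ l hlp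
    have hbal := mul_inner_sub_eq_of_mem_offDiagInnerConst hd hsum hpj
    rw [hrow₀ p hpj, mul_zero] at hbal
    rw [hrow p l j₀ hlp hpj.symm]
    exact (mul_eq_zero.mp hbal).resolve_left (hc p).ne'
  refine sub_eq_zero.mp (eq_zero_of_forall_inner_eq_zero hr fun p => ?_)
  have h := congrArg₂ (· - ·) (hexcess p l) (hexcess p j)
  simp only [inner_sub_right] at h ⊢
  linarith

lemma eq_zero_of_mem_offDiagInnerConst [NeZero m] {a : Fin m → Vec k}
    (ha : coneOf a = Set.univ) (hr : coneOf r = Set.univ) (hd : d ∈ offDiagInnerConst r)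
    {j₀ l₀ : Fin m} (hjl₀ : j₀ ≠ l₀) (h₀ : ⟪r j₀, d j₀ - d l₀⟫ = 0)
    {μ : Fin m → Fin m → ℝ} (hμsum : ∀ i, ∑ j, μ i j = 1) {t : ℝ}
    (hdt : ∀ i, ∑ j, μ i j * ⟪a i, d j⟫ = t) : t = 0 ∧ d = 0 := by
  have hconst := eq_of_mem_offDiagInnerConst hr hd hjl₀ h₀
  have hinner : ∀ i, ⟪a i, d j₀⟫ = t := fun i => by
    simpa [hconst _ j₀, ← Finset.sum_mul, hμsum] using hdt i
  obtain ⟨ht, hd₀⟩ := eq_zero_of_forall_inner_eq ha hinner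
  exact ⟨ht, funext fun j => (hconst j j₀).trans hd₀⟩

end OffDiag

theorem statement17_general (k : ℕ) (hk : 1 ≤ k) (a r : Fin (k + 1) → Vec k)
    (ha : coneOf a = Set.univ) (hr : coneOf r = Set.univ)
    (μ : Fin (k + 1) → Fin (k + 1) → ℝ)
    (hμsum : ∀ i, ∑ j, μ i j = 1)
    (g h : Fin (k + 1) → Vec k)
    (hg1 : ∀ i, ∑ j, μ i j * (inner ℝ (a i) (g j) : ℝ) = 1)
    (hg2 : ∀ i j l, j ≠ i → l ≠ i → (inner ℝ (r i) (g j) : ℝ) = (inner ℝ (r i) (g l) : ℝ))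
    (hh1 : ∀ i, ∑ j, μ i j * (inner ℝ (a i) (h j) : ℝ) = 1)
    (hh2 : ∀ i j l, j ≠ i → l ≠ i → (inner ℝ (r i) (h j) : ℝ) = (inner ℝ (r i) (h l) : ℝ)) :
    g = h := by
  have h01 : (0 : Fin (k + 1)) ≠ 1 := by
    rw [Ne, Fin.ext_iff, Fin.val_zero, Fin.val_one', Nat.mod_eq_of_lt (by omega)]
    omega
  let T : (Fin (k + 1) → Vec k) → ℝ := fun d => ⟪r 0, d 0 - d 1⟫
  have hmem : ∀ s t : ℝ, s • g - t • h ∈ offDiagInnerConst r := fun s t =>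
    sub_mem (Submodule.smul_mem _ s hg2) (Submodule.smul_mem _ t hh2)
  have hT : ∀ s t : ℝ, T (s • g - t • h) = s * T g - t * T h := fun s t => by
    simp only [T, Pi.sub_apply, Pi.smul_apply, inner_sub_right, inner_smul_right]
    ring
  have hsys : ∀ s t i, ∑ j, μ i j * ⟪a i, (s • g - t • h) j⟫ = s - t := fun s t i => by
    simp only [Pi.sub_apply, Pi.smul_apply, inner_sub_right, inner_smul_right, mul_sub,
      Finset.sum_sub_distrib, mul_left_comm _ s, mul_left_comm _ t, ← Finset.mul_sum, hg1, hh1,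
      mul_one]
  have hTgh : T h - T g = 0 :=
    (eq_zero_of_mem_offDiagInnerConst ha hr (hmem _ _) h01 ((hT _ _).trans (by ring)) hμsum
      (hsys (T h) (T g))).1
  have hgh := (eq_zero_of_mem_offDiagInnerConst ha hr (hmem 1 1) h01
    ((hT 1 1).trans (by linarith)) hμsum (hsys 1 1)).2
  simpa [sub_eq_zero] using hgh

/-- The linear system on the gradients has at most one solution. -/
theorem statement17 (k : ℕ) (hk : 1 ≤ k) (a r : Fin (k + 1) → Vec k)
    (ha : coneOf a = Set.univ) (hr : coneOf r = Set.univ)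
    (μ : Fin (k + 1) → Fin (k + 1) → ℝ) (hμ : ∀ i j, 0 ≤ μ i j)
    (hμsum : ∀ i, ∑ j, μ i j = 1)
    (g h : Fin (k + 1) → Vec k)
    (hg1 : ∀ i, ∑ j, μ i j * (inner ℝ (a i) (g j) : ℝ) = 1)
    (hg2 : ∀ i j l, j ≠ i → l ≠ i → (inner ℝ (r i) (g j) : ℝ) = (inner ℝ (r i) (g l) : ℝ))
    (hh1 : ∀ i, ∑ j, μ i j * (inner ℝ (a i) (h j) : ℝ) = 1)
    (hh2 : ∀ i j l, j ≠ i → l ≠ i → (inner ℝ (r i) (h j) : ℝ) = (inner ℝ (r i) (h l) : ℝ)) :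
    g = h :=
  statement17_general k hk a r ha hr μ hμsum g h hg1 hg2 hh1 hh2
end
end
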